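/- For b1, b2, b3 ∈ ℂ let B2_{b1,b2,b3} denote the ℂ-vector space with basis {L, W, x} equipped with the operations extending W(1,0) by x∘L = b1·L + b2·W, L∘x = b1·L, x∘W = 0, W∘x = b1·W, x∘x = b1²·L + b1b2·W, [x,L] = b3·W, [x,W] = 0. Then: (i) B2_{b1,b2,b3} is a Gel'fand-Dorfman bialgebra containing W(1,0) as a subalgebra; (ii) B2_{b1,b2,b3} is equivalent to B2_{b1',b2',b3'} if and only if there exist c1, c2 ∈ ℂ and β ∈ ℂ* with b1 = β·b1' + c1, b2 = β·b2' + c2 and b3 = β·b3'; (iii) consequently, every B2_{b1,b2,b3} is equivalent to B2_{0,0,0} or to B2_{0,0,1}, and B2_{0,0,0} is not equivalent to B2_{0,0,1}. -/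
import Mathlib


namespace GDExt

def IsNovikov {M : Type*} [AddCommGroup M] (mul : M → M → M) : Prop :=
  (∀ a b c, mul (mul a b) c - mul a (mul b c) = mul (mul b a) c - mul b (mul a c)) ∧
  ∀ a b c, mul (mul a b) c = mul (mul a c) b

def IsLieBracket {M : Type*} [AddCommGroup M] (br : M → M → M) : Prop :=
  (∀ a, br a a = 0) ∧ ∀ a b c, br a (br b c) = br (br a b) c + br b (br a c)

def IsGD {M : Type*} [AddCommGroup M] (mul br : M → M → M) : Prop :=
  IsNovikov mul ∧ IsLieBracket br ∧
  ∀ a b c, br a (mul b c) - br c (mul b a) + mul (br b a) c - mul (br b c) a - mul b (br a c) = 0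

variable {K : Type*} [Field K]
variable {A V : Type*} [AddCommGroup A] [Module K A] [AddCommGroup V] [Module K V]

/-- First component bilinear product of the unified product `A ♮ V`. -/
def uniMul (circ : A →ₗ[K] A →ₗ[K] A) (lA rA : A →ₗ[K] Module.End K V)
    (lV rV : V →ₗ[K] Module.End K A) (f : V →ₗ[K] V →ₗ[K] A)
    (st : V →ₗ[K] V →ₗ[K] V) : A × V → A × V → A × V :=
  fun p q =>
    (circ p.1 q.1 + lV p.2 q.1 + rV q.2 p.1 + f p.2 q.2,
     st p.2 q.2 + lA p.1 q.2 + rA q.1 p.2)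

/-- Bracket of the unified product `A ♮ V`. -/
def uniBr (brk : A →ₗ[K] A →ₗ[K] A) (tl : V →ₗ[K] A →ₗ[K] V) (tr : V →ₗ[K] A →ₗ[K] A)
    (hm : V →ₗ[K] V →ₗ[K] A) (vbr : V →ₗ[K] V →ₗ[K] V) : A × V → A × V → A × V :=
  fun p q =>
    (brk p.1 q.1 + tr p.2 q.1 - tr q.2 p.1 + hm p.2 q.2,
     vbr p.2 q.2 + tl p.2 q.1 - tl q.2 p.1)

end GDExt

namespace GDExt

/-- Equivalence of GD bialgebra structures on `ℂL ⊕ ℂW ⊕ ℂx` (coordinates `0 ↦ L`,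
`1 ↦ W`, `2 ↦ x`): a GD bialgebra isomorphism restricting to the identity on
`ℂL ⊕ ℂW`. -/
def GDequiv3 (m br m' br' : (Fin 3 → ℂ) → (Fin 3 → ℂ) → (Fin 3 → ℂ)) : Prop :=
  ∃ φ : (Fin 3 → ℂ) ≃ₗ[ℂ] (Fin 3 → ℂ),
    (∀ u v, φ (m u v) = m' (φ u) (φ v)) ∧
    (∀ u v, φ (br u v) = br' (φ u) (φ v)) ∧
    (∀ u : Fin 3 → ℂ, u 2 = 0 → φ u = u)

end GDExt

namespace GDExt

/-- The Novikov product of `B2_{b1,b2,b3}` in the basis `L = e0, W = e1, x = e2`. -/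
def B2mul (b1 b2 : ℂ) : (Fin 3 → ℂ) → (Fin 3 → ℂ) → (Fin 3 → ℂ) :=
  fun u v =>
    ![u 0 * v 0 + b1 * (u 0 * v 2) + b1 * (u 2 * v 0) + b1 ^ 2 * (u 2 * v 2),
      u 1 * v 0 + b1 * (u 1 * v 2) + b2 * (u 2 * v 0) + b1 * b2 * (u 2 * v 2),
      0]

/-- The Lie bracket of `B2_{b1,b2,b3}`. -/
def B2br (b3 : ℂ) : (Fin 3 → ℂ) → (Fin 3 → ℂ) → (Fin 3 → ℂ) :=
  fun u v =>
    ![0, b3 * (u 2 * v 0 - u 0 * v 2), 0]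


private lemma isGD_B2 (b1 b2 b3 : ℂ) : IsGD (B2mul b1 b2) (B2br b3) := by
  refine ⟨⟨?_, ?_⟩, ⟨?_, ?_⟩, ?_⟩
  · intros; funext i; fin_cases i <;> simp [B2mul] <;> ring
  · intros; funext i; fin_cases i <;> simp [B2mul] <;> ring
  · intro a; funext i; fin_cases i <;> simp [B2br, mul_comm]
  · intros; funext i; fin_cases i <;> simp [B2br, B2mul] <;> ring
  · intros; funext i; fin_cases i <;> simp [B2br, B2mul] <;> ring

noncomputable def phiEquiv (c1 c2 β : ℂ) (hβ : β ≠ 0) : (Fin 3 → ℂ) ≃ₗ[ℂ] (Fin 3 → ℂ) where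
  toFun u := ![u 0 + c1 * u 2, u 1 + c2 * u 2, β * u 2]
  invFun u := ![u 0 - c1 / β * u 2, u 1 - c2 / β * u 2, u 2 / β]
  map_add' u v := by funext i; fin_cases i <;> simp <;> ring
  map_smul' r u := by funext i; fin_cases i <;> simp <;> ring
  left_inv u := by
    funext i; fin_cases i <;> simp <;> field_simp <;> ring
  right_inv u := by
    funext i; fin_cases i <;> simp <;> field_simp <;> ring

private lemma equiv_of_params (b1 b2 b3 b1' b2' b3' c1 c2 β : ℂ) (hβ : β ≠ 0)
    (h1 : b1 = β * b1' + c1) (h2 : b2 = β * b2' + c2) (h3 : b3 = β * b3') :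
    GDequiv3 (B2mul b1 b2) (B2br b3) (B2mul b1' b2') (B2br b3') := by
  refine ⟨phiEquiv c1 c2 β hβ, ?_, ?_, ?_⟩
  · intro u v
    funext i
    fin_cases i <;>
      simp [phiEquiv, B2mul, h1, h2] <;> ring
  · intro u v
    funext i
    fin_cases i <;>
      simp [phiEquiv, B2br, h3] <;> ring
  · intro u hu
    funext i
    fin_cases i <;> simp [phiEquiv, hu]

private lemma params_of_equiv (b1 b2 b3 b1' b2' b3' : ℂ)
    (h : GDequiv3 (B2mul b1 b2) (B2br b3) (B2mul b1' b2') (B2br b3')) :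
    ∃ c1 c2 β : ℂ, β ≠ 0 ∧ b1 = β * b1' + c1 ∧ b2 = β * b2' + c2 ∧ b3 = β * b3' := by
  obtain ⟨φ, hm, hb, hid⟩ := h
  set w : Fin 3 → ℂ := φ ![0, 0, 1] with hw
  refine ⟨w 0, w 1, w 2, ?_, ?_, ?_, ?_⟩
  · intro h2
    have hfix : φ w = w := hid w h2
    have : (![0, 0, 1] : Fin 3 → ℂ) = w := φ.injective (by rw [hfix, hw])
    have := congrFun this 2
    simp [h2] at this
  · have key := hm ![0, 0, 1] ![1, 0, 0]
    rw [hid ![1, 0, 0] (by simp)] at key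
    have hmul : B2mul b1 b2 ![0, 0, 1] ![1, 0, 0] = ![b1, b2, 0] := by
      funext i; fin_cases i <;> simp [B2mul]
    rw [hmul, hid ![b1, b2, 0] (by simp)] at key
    have := congrFun key 0
    simp [B2mul, ← hw] at this
    linear_combination this
  · have key := hm ![0, 0, 1] ![1, 0, 0]
    rw [hid ![1, 0, 0] (by simp)] at key
    have hmul : B2mul b1 b2 ![0, 0, 1] ![1, 0, 0] = ![b1, b2, 0] := by
      funext i; fin_cases i <;> simp [B2mul]
    rw [hmul, hid ![b1, b2, 0] (by simp)] at key
    have := congrFun key 1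
    simp [B2mul, ← hw] at this
    linear_combination this
  · have key := hb ![0, 0, 1] ![1, 0, 0]
    rw [hid ![1, 0, 0] (by simp)] at key
    have hbr : B2br b3 ![0, 0, 1] ![1, 0, 0] = ![0, b3, 0] := by
      funext i; fin_cases i <;> simp [B2br]
    rw [hbr, hid ![0, b3, 0] (by simp)] at key
    have := congrFun key 1
    simp [B2br, ← hw] at this
    linear_combination this

/-- Case B2. -/
theorem caseB2 :
    (∀ b1 b2 b3 : ℂ, IsGD (B2mul b1 b2) (B2br b3) ∧
      ∀ u v : Fin 3 → ℂ, u 2 = 0 → v 2 = 0 →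
        B2mul b1 b2 u v = ![u 0 * v 0, u 1 * v 0, 0] ∧
        B2br b3 u v = 0) ∧
    (∀ b1 b2 b3 b1' b2' b3' : ℂ,
      GDequiv3 (B2mul b1 b2) (B2br b3) (B2mul b1' b2') (B2br b3') ↔
        ∃ c1 c2 β : ℂ, β ≠ 0 ∧ b1 = β * b1' + c1 ∧ b2 = β * b2' + c2 ∧ b3 = β * b3') ∧
    (∀ b1 b2 b3 : ℂ,
      GDequiv3 (B2mul b1 b2) (B2br b3) (B2mul 0 0) (B2br 0) ∨
      GDequiv3 (B2mul b1 b2) (B2br b3) (B2mul 0 0) (B2br 1)) ∧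
    ¬ GDequiv3 (B2mul 0 0) (B2br 0) (B2mul 0 0) (B2br 1) := by
  constructor
  · intro b1 b2 b3
    refine ⟨isGD_B2 b1 b2 b3, ?_⟩
    intro u v hu hv
    constructor
    · funext i; fin_cases i <;> simp [B2mul, hu, hv]
    · funext i; fin_cases i <;> simp [B2br, hu, hv]
  refine ⟨?_, ?_, ?_⟩
  · intro b1 b2 b3 b1' b2' b3'
    constructor
    · exact params_of_equiv b1 b2 b3 b1' b2' b3'
    · rintro ⟨c1, c2, β, hβ, h1, h2, h3⟩
      exact equiv_of_params b1 b2 b3 b1' b2' b3' c1 c2 β hβ h1 h2 h3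
  · intro b1 b2 b3
    by_cases hb3 : b3 = 0
    · left
      exact equiv_of_params b1 b2 b3 0 0 0 b1 b2 1 one_ne_zero (by ring) (by ring)
        (by rw [hb3]; ring)
    · right
      exact equiv_of_params b1 b2 b3 0 0 1 b1 b2 b3 hb3 (by ring) (by ring) (by ring)
  · intro h
    obtain ⟨c1, c2, β, hβ, _, _, h3⟩ := params_of_equiv 0 0 0 0 0 1 h
    simp at h3
    exact hβ h3.symm

end GDExt
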